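/- Let (M, F, μ) be a measure space admitting a continuous resolution and let f: M → ℝ be measurable. For every z in the spectrum of the multiplication operator M_f on L²(M, μ) (equivalently, every z in the essential range of f), there exists a sequence {A_n}_{n=1}^∞ ⊆ F of pairwise disjoint sets such that |f(x) − z| ≤ 1/n for all x ∈ A_n, μ(A_n) > 0 for all n, and Σ_{n=1}^∞ μ(A_n) < ∞. -/

import Mathlib

/-!
For a set `S` of positive measure, `x ↦ μ (S ∩ A x)` is continuous on `[0, ∞)`, vanishes at `0`
and becomes positive, so by the intermediate value theorem `S` has subsets of arbitrarily small
positive measure. Choose such `T n ⊆ {x | |f x - z| < 1 / (n + 1)}` with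
`μ (T (n + 1)) ≤ μ (T n) / 3`; then the later sets `T k`, `k > n`, have total measure at most
`μ (T n) / 2`, so removing them from `T n` leaves disjoint sets of positive measure.
-/

open MeasureTheory Filter

/-- A continuous resolution for a measure space `(M, μ)`: a family `(A x)_{x ≥ 0}` of
measurable sets with `μ (A 0) = 0`, monotone in `x`, each of finite measure, whose
indicator functions converge μ-a.e. as `x → y` (within `[0, ∞)`), and whose union is `M`. -/
structure ContinuousResolution {M : Type} [MeasurableSpace M] (μ : Measure M)
    (A : ℝ → Set M) : Prop where
  measurable : ∀ x, 0 ≤ x → MeasurableSet (A x)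
  zero : μ (A 0) = 0
  mono : ∀ x y, 0 ≤ x → x ≤ y → A x ⊆ A y
  finite : ∀ x, 0 ≤ x → μ (A x) < ⊤
  cont : ∀ y, 0 ≤ y → ∀ᵐ p ∂μ,
    Tendsto (fun x => Set.indicator (A x) (fun _ => (1 : ℝ)) p)
      (nhdsWithin y (Set.Ici 0)) (nhds (Set.indicator (A y) (fun _ => (1 : ℝ)) p))
  covers : ⋃ x ∈ Set.Ici (0 : ℝ), A x = Set.univ

open Set
open scoped ENNReal

namespace ContinuousResolution

variable {M : Type} [MeasurableSpace M] {μ : Measure M} {A : ℝ → Set M}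

theorem iUnion_nat (hA : ContinuousResolution μ A) : ⋃ n : ℕ, A n = univ := by
  refine eq_univ_of_forall fun p => ?_
  obtain ⟨x, hx, hpx⟩ := mem_iUnion₂.1 (hA.covers ▸ mem_univ p)
  exact mem_iUnion.2 ⟨⌈x⌉₊, hA.mono x ⌈x⌉₊ hx (Nat.le_ceil x) hpx⟩

theorem exists_nat_measure_inter_pos (hA : ContinuousResolution μ A) {S : Set M}
    (hS : 0 < μ S) : ∃ n : ℕ, 0 < μ (S ∩ A n) := by
  by_contra! h
  have hnull : μ (⋃ n : ℕ, S ∩ A n) = 0 := measure_iUnion_null fun n => nonpos_iff_eq_zero.1 (h n)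
  rw [← inter_iUnion, hA.iUnion_nat, inter_univ] at hnull
  exact hS.ne' hnull

theorem measureReal_inter_zero (hA : ContinuousResolution μ A) (S : Set M) :
    μ.real (S ∩ A 0) = 0 := by
  rw [measureReal_def, measure_mono_null inter_subset_right hA.zero, ENNReal.toReal_zero]

/-- Dominated convergence, with `1_{A (y + 1)}` as dominating function near `y`. -/
theorem continuousOn_measureReal_inter (hA : ContinuousResolution μ A) (S : Set M) :
    ContinuousOn (fun x => μ.real (S ∩ A x)) (Ici 0) := by
  have hint : ∀ x, 0 ≤ x →
      ∫ p in S, (A x).indicator (fun _ => (1 : ℝ)) p ∂μ = μ.real (S ∩ A x) := fun x hx => by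
    rw [integral_indicator_const _ (hA.measurable x hx), measureReal_restrict_apply
      (hA.measurable x hx), inter_comm, smul_eq_mul, mul_one]
  intro y (hy : 0 ≤ y)
  have hnear : ∀ᶠ x in nhdsWithin y (Ici 0), 0 ≤ x ∧ x ≤ y + 1 :=
    eventually_mem_nhdsWithin.and
      (eventually_nhdsWithin_of_eventually_nhds (eventually_le_nhds (by linarith)))
  have hdom : Tendsto (fun x => ∫ p in S, (A x).indicator (fun _ => (1 : ℝ)) p ∂μ)
      (nhdsWithin y (Ici 0)) (nhds (∫ p in S, (A y).indicator (fun _ => (1 : ℝ)) p ∂μ)) := by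
    refine tendsto_integral_filter_of_dominated_convergence
      ((A (y + 1)).indicator fun _ => 1) ?_ ?_ ?_ (ae_restrict_of_ae (hA.cont y hy))
    · filter_upwards [hnear] with x hx
      exact (measurable_const.indicator (hA.measurable x hx.1)).aestronglyMeasurable
    · filter_upwards [hnear] with x hx
      refine Eventually.of_forall fun p => ?_
      rw [Real.norm_of_nonneg (indicator_nonneg (fun _ _ => zero_le_one) p)]
      exact indicator_le_indicator_of_subset (hA.mono x (y + 1) hx.1 hx.2)
        (fun _ => zero_le_one) p
    · rw [integrable_indicator_iff (hA.measurable (y + 1) (by linarith))]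
      exact integrableOn_const ((Measure.restrict_apply_le _ _).trans_lt
        (hA.finite (y + 1) (by linarith))).ne
  rw [ContinuousWithinAt, ← hint y hy]
  exact hdom.congr' (hnear.mono fun x hx => hint x hx.1)

theorem exists_subset_measure_pos_le (hA : ContinuousResolution μ A) {S : Set M}
    (hS : MeasurableSet S) (hpos : 0 < μ S) {ε : ℝ≥0∞} (hε : ε ≠ 0) :
    ∃ T ⊆ S, MeasurableSet T ∧ 0 < μ T ∧ μ T ≤ ε := by
  obtain ⟨n, hn⟩ := hA.exists_nat_measure_inter_pos hpos
  have hfin : ∀ x, 0 ≤ x → μ (S ∩ A x) ≠ ⊤ := fun x hx =>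
    ((measure_mono inter_subset_right).trans_lt (hA.finite x hx)).ne
  set v := min ε (μ (S ∩ A n))
  have hv_fin : v ≠ ⊤ := (min_le_right _ _).trans_lt (hfin n n.cast_nonneg).lt_top |>.ne
  have hv_pos : 0 < v := lt_min hε.bot_lt hn
  have hIVT : v.toReal ∈ (fun x => μ.real (S ∩ A x)) '' Icc 0 (n : ℝ) := by
    refine intermediate_value_Icc n.cast_nonneg
      ((hA.continuousOn_measureReal_inter S).mono Icc_subset_Ici_self) ⟨?_, ?_⟩
    · rw [hA.measureReal_inter_zero]
      exact ENNReal.toReal_nonneg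
    · exact ENNReal.toReal_mono (hfin n n.cast_nonneg) (min_le_right _ _)
  obtain ⟨t, ht, hvt⟩ := hIVT
  have hμt : μ (S ∩ A t) = v :=
    (ENNReal.toReal_eq_toReal_iff' (hfin t ht.1) hv_fin).1 hvt
  exact ⟨S ∩ A t, inter_subset_left, hS.inter (hA.measurable t ht.1), hμt ▸ hv_pos,
    hμt ▸ min_le_left _ _⟩

end ContinuousResolution

namespace ENNReal

theorem le_pow_mul_of_succ_le_mul {a : ℕ → ℝ≥0∞} {r : ℝ≥0∞} (h : ∀ n, a (n + 1) ≤ r * a n)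
    (n k : ℕ) : a (n + k) ≤ r ^ k * a n := by
  induction k with
  | zero => simp
  | succ k ih =>
    calc a (n + (k + 1)) ≤ r * a (n + k) := h (n + k)
      _ ≤ r * (r ^ k * a n) := by gcongr
      _ = r ^ (k + 1) * a n := by rw [← mul_assoc, pow_succ']

theorem inv_three_mul_inv_one_sub_inv_three : (3⁻¹ : ℝ≥0∞) * (1 - 3⁻¹)⁻¹ = 2⁻¹ := by
  have h : (1 : ℝ≥0∞) - 3⁻¹ = 2 * 3⁻¹ := by
    refine ENNReal.sub_eq_of_eq_add (by simp) ?_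
    rw [← add_one_mul, two_add_one_eq_three, ENNReal.mul_inv_cancel] <;> norm_num
  rw [h, ENNReal.mul_inv (by simp) (by simp), inv_inv, mul_left_comm,
    ENNReal.inv_mul_cancel (by simp) (by simp), mul_one]

theorem tsum_add_one_le_half_of_succ_le_inv_three_mul {a : ℕ → ℝ≥0∞}
    (h : ∀ n, a (n + 1) ≤ 3⁻¹ * a n) (n : ℕ) : ∑' k, a (n + 1 + k) ≤ 2⁻¹ * a n :=
  calc ∑' k, a (n + 1 + k) ≤ ∑' k, 3⁻¹ ^ (k + 1) * a n := ENNReal.tsum_le_tsum fun k => by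
        rw [add_right_comm]; exact le_pow_mul_of_succ_le_mul h n (k + 1)
    _ = 2⁻¹ * a n := by
        rw [ENNReal.tsum_mul_right, ENNReal.tsum_geometric_add_one,
          inv_three_mul_inv_one_sub_inv_three]

theorem tsum_lt_top_of_succ_le_mul {a : ℕ → ℝ≥0∞} {r : ℝ≥0∞} (h : ∀ n, a (n + 1) ≤ r * a n)
    (hr : r < 1) (h0 : a 0 ≠ ⊤) : ∑' n, a n < ⊤ :=
  calc ∑' n, a n ≤ ∑' n, r ^ n * a 0 := ENNReal.tsum_le_tsum fun n => by
        simpa only [zero_add] using le_pow_mul_of_succ_le_mul h 0 n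
    _ = (1 - r)⁻¹ * a 0 := by rw [ENNReal.tsum_mul_right, ENNReal.tsum_geometric]
    _ < ⊤ := ENNReal.mul_lt_top (ENNReal.inv_lt_top.2 (tsub_pos_of_lt hr)) h0.lt_top

end ENNReal

section DisjointSubsets

variable {M : Type} [MeasurableSpace M] {μ : Measure M} {S : ℕ → Set M}

theorem exists_seq_subset_measure_pos_succ_le
    (hsmall : ∀ n ε, ε ≠ 0 → ∃ T ⊆ S n, MeasurableSet T ∧ 0 < μ T ∧ μ T ≤ ε) :
    ∃ T : ℕ → Set M, (∀ n, T n ⊆ S n) ∧ (∀ n, MeasurableSet (T n)) ∧ (∀ n, 0 < μ (T n)) ∧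
      μ (T 0) ≤ 1 ∧ ∀ n, μ (T (n + 1)) ≤ 3⁻¹ * μ (T n) := by
  choose! F hFsub hFmeas hFpos hFle using hsmall
  let T : ℕ → Set M := fun n => Nat.rec (F 0 1) (fun k prev => F (k + 1) (3⁻¹ * μ prev)) n
  have hpos : ∀ n, 0 < μ (T n) := by
    intro n
    induction n with
    | zero => exact hFpos 0 1 one_ne_zero
    | succ n ih => exact hFpos (n + 1) _ (mul_ne_zero (by simp) ih.ne')
  have hne : ∀ n, 3⁻¹ * μ (T n) ≠ 0 := fun n => mul_ne_zero (by simp) (hpos n).ne'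
  refine ⟨T, fun n => ?_, fun n => ?_, hpos, hFle 0 1 one_ne_zero,
    fun n => hFle (n + 1) _ (hne n)⟩
  · cases n with
    | zero => exact hFsub 0 1 one_ne_zero
    | succ n => exact hFsub (n + 1) _ (hne n)
  · cases n with
    | zero => exact hFmeas 0 1 one_ne_zero
    | succ n => exact hFmeas (n + 1) _ (hne n)

theorem exists_pairwise_disjoint_subset_measure_pos_tsum_lt_top
    (hsmall : ∀ n ε, ε ≠ 0 → ∃ T ⊆ S n, MeasurableSet T ∧ 0 < μ T ∧ μ T ≤ ε) :
    ∃ B : ℕ → Set M, (∀ n, MeasurableSet (B n)) ∧ Pairwise (Function.onFun Disjoint B) ∧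
      (∀ n, B n ⊆ S n) ∧ (∀ n, 0 < μ (B n)) ∧ (∑' n, μ (B n)) < ⊤ := by
  obtain ⟨T, hTS, hTmeas, hTpos, hT0, hTdecay⟩ := exists_seq_subset_measure_pos_succ_le hsmall
  have hTfin : ∀ n, μ (T n) ≠ ⊤ := fun n =>
    ((zero_add n ▸ ENNReal.le_pow_mul_of_succ_le_mul hTdecay 0 n).trans_lt
      (ENNReal.mul_lt_top (by simp) (hT0.trans_lt ENNReal.one_lt_top))).ne
  let tail : ℕ → Set M := fun n => ⋃ k, T (n + 1 + k)
  have htail : ∀ n, μ (tail n) < μ (T n) := fun n =>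
    calc μ (tail n) ≤ ∑' k, μ (T (n + 1 + k)) := measure_iUnion_le _
      _ ≤ 2⁻¹ * μ (T n) := ENNReal.tsum_add_one_le_half_of_succ_le_inv_three_mul hTdecay n
      _ < μ (T n) := by
        rw [← ENNReal.div_eq_inv_mul]; exact ENNReal.half_lt_self (hTpos n).ne' (hTfin n)
  refine ⟨fun n => T n \ tail n, fun n => (hTmeas n).diff (.iUnion fun k => hTmeas _), ?_,
    fun n => sdiff_subset.trans (hTS n), fun n => ?_, ?_⟩
  · refine (pairwise_disjoint_on _).2 fun n m hnm => disjoint_left.2 fun x hxn hxm => ?_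
    exact hxn.2 (mem_iUnion.2 ⟨m - n - 1, by rw [show n + 1 + (m - n - 1) = m by omega]; exact hxm.1⟩)
  · refine pos_iff_ne_zero.2 fun h0 => (htail n).not_ge ?_
    exact tsub_eq_zero_iff_le.1 (nonpos_iff_eq_zero.1 (h0 ▸ le_measure_sdiff))
  · exact lt_of_le_of_lt (ENNReal.tsum_le_tsum fun n => measure_mono sdiff_subset)
      (ENNReal.tsum_lt_top_of_succ_le_mul hTdecay (by norm_num) (hTfin 0))

end DisjointSubsets

/-- If `(M, μ)` admits a continuous resolution, `f : M → ℝ` is measurable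
and `z` lies in the essential range of `f` (equivalently, the spectrum of the multiplication
operator `M_f`), then there are pairwise disjoint measurable sets `Aₙ` of positive measure
with `|f x − z| ≤ 1/n` on `Aₙ` (here indexed so that `A n` corresponds to `1/(n+1)`) and
`∑ₙ μ (Aₙ) < ∞`. -/
theorem stmt4 {M : Type} [MeasurableSpace M] (μ : Measure M) (A : ℝ → Set M)
    (hA : ContinuousResolution μ A) (f : M → ℝ) (hf : Measurable f) (z : ℝ)
    (hz : ∀ ε : ℝ, 0 < ε → 0 < μ {x | |f x - z| < ε}) :
    ∃ B : ℕ → Set M, (∀ n, MeasurableSet (B n)) ∧ Pairwise (Function.onFun Disjoint B) ∧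
      (∀ n, ∀ x ∈ B n, |f x - z| ≤ 1 / (n + 1)) ∧ (∀ n, 0 < μ (B n)) ∧
      (∑' n, μ (B n)) < ⊤ := by
  let S : ℕ → Set M := fun n => {x | |f x - z| < 1 / ((n : ℝ) + 1)}
  have hsmall : ∀ n ε, ε ≠ 0 → ∃ T ⊆ S n, MeasurableSet T ∧ 0 < μ T ∧ μ T ≤ ε :=
    fun n _ hε => hA.exists_subset_measure_pos_le
      (measurableSet_lt (hf.sub measurable_const).abs measurable_const)
      (hz _ (by positivity)) hε
  obtain ⟨B, hBmeas, hBdisj, hBS, hBpos, hBsum⟩ :=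
    exists_pairwise_disjoint_subset_measure_pos_tsum_lt_top hsmall
  exact ⟨B, hBmeas, hBdisj, fun n x hx => (hBS n hx).le, hBpos, hBsum⟩
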